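/- arXiv:1411.5562 — 3 statements merged into one kernel-verified Lean document; each statement's English description precedes it below -/
import Mathlib

section
/- Let U be a Banach space, (u_n) a convergent sequence in U, and (A_n) a sequence of bounded linear operators on U such that there exists c < 1 with ‖A_n u‖ ≤ c‖u‖ for all u ∈ U and all n, and such that for every u ∈ U the sequence (A_n u) converges in U. If (v_n) is a sequence in U satisfying v_{n+1} = A_n v_n + u_n for all n, then (v_n) converges in U. -/
/-!
The maps `Fₙ x = Aₙ x + uₙ` are uniform `c`-contractions converging pointwise to
`F x = lim Aₙ x + lim uₙ`, which is therefore a `c`-contraction with a fixed point `w`. Then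
`‖vₙ₊₁ - w‖ ≤ c ‖vₙ - w‖ + ‖Fₙ w - w‖` with the last term tending to `0`, which forces
`‖vₙ - w‖ → 0`.
-/

open Filter Topology NNReal

lemma le_pow_mul_add_of_le_mul_add {a : ℕ → ℝ} {c d : ℝ} {N : ℕ} (hc0 : 0 ≤ c) (hc1 : c < 1)
    (hd : 0 ≤ d) (h : ∀ n ≥ N, a (n + 1) ≤ c * a n + d) (k : ℕ) :
    a (N + k) ≤ c ^ k * a N + d / (1 - c) := by
  induction k with
  | zero => simpa using div_nonneg hd (sub_nonneg.2 hc1.le)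
  | succ k ih =>
    have hgeom : c * (d / (1 - c)) + d = d / (1 - c) := by
      field_simp [(sub_pos.2 hc1).ne']
      ring
    calc a (N + (k + 1)) ≤ c * a (N + k) + d := h (N + k) (Nat.le_add_right N k)
      _ ≤ c * (c ^ k * a N + d / (1 - c)) + d := by gcongr
      _ = c ^ (k + 1) * a N + d / (1 - c) := by linear_combination hgeom

lemma tendsto_zero_of_le_mul_add {a δ : ℕ → ℝ} {c : ℝ} (hc0 : 0 ≤ c) (hc1 : c < 1)
    (ha : ∀ n, 0 ≤ a n) (hδ : Tendsto δ atTop (𝓝 0))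
    (h : ∀ n, a (n + 1) ≤ c * a n + δ n) :
    Tendsto a atTop (𝓝 0) := by
  refine tendsto_order.2 ⟨fun b hb => .of_forall fun n => hb.trans_le (ha n), fun ε hε => ?_⟩
  have h1c : 0 < 1 - c := sub_pos.2 hc1
  set d := ε * (1 - c) / 2
  obtain ⟨N, hN⟩ := eventually_atTop.1 ((tendsto_order.1 hδ).2 d (by positivity))
  have hbound := le_pow_mul_add_of_le_mul_add (a := a) (d := d) hc0 hc1 (by positivity)
    (fun n hn => (h n).trans (by gcongr; exact (hN n hn).le))
  have hd : d / (1 - c) = ε / 2 := by field_simp [d]; ring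
  have hpow : Tendsto (fun k => c ^ k * a N + d / (1 - c)) atTop (𝓝 (ε / 2)) := by
    simpa [hd] using ((tendsto_pow_atTop_nhds_zero_of_lt_one hc0 hc1).mul_const (a N)).add_const
      (d / (1 - c))
  obtain ⟨K, hK⟩ := eventually_atTop.1 ((tendsto_order.1 hpow).2 ε (by linarith))
  refine eventually_atTop.2 ⟨N + K, fun n hn => ?_⟩
  obtain ⟨k, rfl⟩ := Nat.exists_eq_add_of_le (le_of_add_le_left hn)
  exact (hbound k).trans_lt (hK k (by omega))

lemma LipschitzWith.of_tendsto {α β : Type*} [PseudoEMetricSpace α] [PseudoEMetricSpace β]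
    {K : ℝ≥0} {F : ℕ → α → β} {G : α → β} (hF : ∀ n, LipschitzWith K (F n))
    (hG : ∀ x, Tendsto (fun n => F n x) atTop (𝓝 (G x))) : LipschitzWith K G :=
  (isClosed_setOfPred_lipschitzWith K).mem_of_tendsto (tendsto_pi_nhds.2 hG) (.of_forall hF)

lemma tendsto_of_lipschitzWith_of_tendsto_self {α : Type*} [PseudoMetricSpace α] {K : ℝ≥0}
    (hK : K < 1) {F : ℕ → α → α} (hF : ∀ n, LipschitzWith K (F n)) {w : α}
    (hw : Tendsto (fun n => F n w) atTop (𝓝 w)) {v : ℕ → α} (hv : ∀ n, v (n + 1) = F n (v n)) :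
    Tendsto v atTop (𝓝 w) := by
  refine tendsto_iff_dist_tendsto_zero.2 (tendsto_zero_of_le_mul_add K.2 hK (fun n => dist_nonneg)
    (tendsto_iff_dist_tendsto_zero.1 hw) fun n => ?_)
  calc dist (v (n + 1)) w ≤ dist (F n (v n)) (F n w) + dist (F n w) w := hv n ▸ dist_triangle _ _ _
    _ ≤ K * dist (v n) w + dist (F n w) w := by gcongr; exact (hF n).dist_le_mul _ _

lemma tendsto_of_lipschitzWith_of_tendsto {α : Type*} [MetricSpace α] [CompleteSpace α]
    [Nonempty α] {K : ℝ≥0} (hK : K < 1) {F : ℕ → α → α} (hF : ∀ n, LipschitzWith K (F n))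
    (hconv : ∀ x, ∃ y, Tendsto (fun n => F n x) atTop (𝓝 y)) {v : ℕ → α}
    (hv : ∀ n, v (n + 1) = F n (v n)) : ∃ w, Tendsto v atTop (𝓝 w) := by
  choose G hG using hconv
  have hGc : ContractingWith K G := ⟨hK, .of_tendsto hF hG⟩
  exact ⟨_, tendsto_of_lipschitzWith_of_tendsto_self hK hF
    (hGc.fixedPoint_isFixedPt (f := G) ▸ hG _) hv⟩

/-- Linear fiber contraction principle (Lemma A.1). -/
theorem stmt_0 {U : Type*} [NormedAddCommGroup U] [NormedSpace ℝ U] [CompleteSpace U]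
    (u v : ℕ → U) (A : ℕ → U →L[ℝ] U) (c : ℝ) (hc : c < 1)
    (hu : ∃ l, Tendsto u atTop (nhds l))
    (hA : ∀ n x, ‖A n x‖ ≤ c * ‖x‖)
    (hAconv : ∀ x : U, ∃ y, Tendsto (fun n => A n x) atTop (nhds y))
    (hv : ∀ n, v (n + 1) = A n (v n) + u n) :
    ∃ w, Tendsto v atTop (nhds w) := by
  obtain ⟨l, hl⟩ := hu
  have hlip : ∀ n, LipschitzWith c.toNNReal (fun x => A n x + u n) := fun n =>
    LipschitzWith.of_dist_le' fun x y => by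
      simpa [dist_eq_norm, ← map_sub] using hA n (x - y)
  refine tendsto_of_lipschitzWith_of_tendsto (Real.toNNReal_lt_one.2 hc) hlip (fun x => ?_) hv
  obtain ⟨y, hy⟩ := hAconv x
  exact ⟨y + l, hy.add hl⟩
end

section
/- Let X be a Banach space and A : [−ε₀, ε₀] → (bounded invertible operators on X) with ‖A(λ)⁻¹‖ ≤ c for all λ. Suppose there is a map A' : [−ε₀, ε₀] → L(Y, X), where Y is a Banach space continuously embedded in X, such that for every f ∈ Y: ‖(A(λ+μ) − A(λ) − μ A'(λ))f‖_X = o(|μ|) uniformly, and λ ↦ A'(λ)f is continuous. Then for every f ∈ Y the map λ ↦ A(λ)⁻¹ f is differentiable in X with derivative −A(λ)⁻¹ A'(λ) A(λ)⁻¹ f, provided also A(λ)⁻¹ maps Y into Y with uniformly bounded Y-norm and λ ↦ A(λ)g is continuous in X for g ∈ X. -/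
/-!
Write `y = A(λ)⁻¹ f`. Then `A(μ)⁻¹ f = y - A(μ)⁻¹ (A(μ) y - A(λ) y)`, and `μ ↦ A(μ) y - A(λ) y`
vanishes at `λ` and is differentiable there with derivative `A'(λ) y`. Composing a function that
vanishes at a point with a uniformly bounded, strongly continuous operator family costs no
differentiability of the family, and strong continuity of `μ ↦ A(μ)⁻¹` follows from that of
`μ ↦ A(μ)` and the uniform bound on the inverses.
-/

open Filter Topology Asymptotics

section

variable {𝕜 E F : Type*} [NontriviallyNormedField 𝕜]
  [NormedAddCommGroup E] [NormedSpace 𝕜 E] [NormedAddCommGroup F] [NormedSpace 𝕜 F]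

theorem ContinuousLinearEquiv.tendsto_symm_apply_of_tendsto_apply {α : Type*} {L : Filter α}
    {A : α → E ≃L[𝕜] F} {A₀ : E ≃L[𝕜] F} {C : ℝ}
    (hbound : ∀ᶠ m in L, ∀ x, ‖(A m).symm x‖ ≤ C * ‖x‖) {x : F}
    (hA : Tendsto (fun m => A m (A₀.symm x)) L (𝓝 x)) :
    Tendsto (fun m => (A m).symm x) L (𝓝 (A₀.symm x)) := by
  rw [tendsto_iff_norm_sub_tendsto_zero]
  have hsmall : Tendsto (fun m => C * ‖x - A m (A₀.symm x)‖) L (𝓝 0) := by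
    simpa using ((tendsto_iff_norm_sub_tendsto_zero.mp hA).const_mul C).congr
      fun m => by rw [norm_sub_rev]
  refine squeeze_zero' (Eventually.of_forall fun _ => norm_nonneg _) ?_ hsmall
  filter_upwards [hbound] with m hm
  have hdiff : (A m).symm x - A₀.symm x = (A m).symm (x - A m (A₀.symm x)) := by
    rw [map_sub, ContinuousLinearEquiv.symm_apply_apply]
  exact hdiff ▸ hm _

/-- A product rule that needs no differentiability of the operator family `B`: the factor
`g` vanishes at `l`, so the term `(B m - B l) (g l)` is absent. -/
theorem HasDerivWithinAt.clm_apply_of_apply_eq_zero {B : 𝕜 → E →L[𝕜] F} {g : 𝕜 → E} {v : E}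
    {s : Set 𝕜} {l : 𝕜} {C : ℝ} (hg : HasDerivWithinAt g v s l) (hg0 : g l = 0)
    (hbound : ∀ᶠ m in 𝓝[s] l, ∀ w, ‖B m w‖ ≤ C * ‖w‖)
    (hB : Tendsto (fun m => B m v) (𝓝[s] l) (𝓝 (B l v))) :
    HasDerivWithinAt (fun m => B m (g m)) (B l v) s l := by
  rw [hasDerivWithinAt_iff_isLittleO] at hg ⊢
  have hremainder : (fun m => B m (g m - g l - (m - l) • v)) =o[𝓝[s] l] fun m => m - l :=
    (IsBigO.of_bound C (hbound.mono fun m hm => hm _)).trans_isLittleO hg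
  have hvariation : (fun m => (m - l) • (B m v - B l v)) =o[𝓝[s] l] fun m => m - l := by
    simpa using (isBigO_refl (fun m => m - l) _).smul_isLittleO
      ((isLittleO_one_iff 𝕜).mpr (tendsto_sub_nhds_zero_iff.mpr hB))
  refine (hremainder.add hvariation).congr (fun m => ?_) fun _ => rfl
  simp only [hg0, map_sub, map_smul, map_zero, sub_zero, smul_sub]
  abel

end

theorem stmt_14_general {X Y : Type*}
    [NormedAddCommGroup X] [NormedSpace ℝ X]
    [NormedAddCommGroup Y] [NormedSpace ℝ Y]
    (ε₀ c : ℝ)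
    (jYX : Y →L[ℝ] X)
    (A : ℝ → X ≃L[ℝ] X)
    (hbound : ∀ l ∈ Set.Icc (-ε₀) ε₀, ∀ f : X, ‖(A l).symm f‖ ≤ c * ‖f‖)
    (A' : ℝ → Y →L[ℝ] X)
    (hderiv : ∀ f : Y, ∀ l ∈ Set.Icc (-ε₀) ε₀,
      HasDerivWithinAt (fun m => A m (jYX f)) (A' l f) (Set.Icc (-ε₀) ε₀) l)
    (hcont : ∀ g : X, ContinuousOn (fun l => A l g) (Set.Icc (-ε₀) ε₀))
    (Ainv : ℝ → Y → Y)
    (hAinv : ∀ l ∈ Set.Icc (-ε₀) ε₀, ∀ g : Y, jYX (Ainv l g) = (A l).symm (jYX g)) :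
    ∀ f : Y, ∀ l ∈ Set.Icc (-ε₀) ε₀,
      HasDerivWithinAt (fun m => (A m).symm (jYX f))
        (-((A l).symm (A' l (Ainv l f)))) (Set.Icc (-ε₀) ε₀) l := by
  intro f l hl
  set s := Set.Icc (-ε₀) ε₀
  set y := jYX (Ainv l f)
  have hy : A l y = jYX f := by simp [y, hAinv l hl f]
  have hbound' : ∀ᶠ m in 𝓝[s] l, ∀ x, ‖(A m).symm x‖ ≤ c * ‖x‖ :=
    eventually_nhdsWithin_of_forall hbound
  have hstrong : Tendsto (fun m => (A m).symm (A' l (Ainv l f))) (𝓝[s] l)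
      (𝓝 ((A l).symm (A' l (Ainv l f)))) :=
    ContinuousLinearEquiv.tendsto_symm_apply_of_tendsto_apply hbound' <| by
      simpa [ContinuousWithinAt] using hcont ((A l).symm (A' l (Ainv l f))) l hl
  have hcorrection : HasDerivWithinAt (fun m => (A m).symm (A m y - jYX f))
      ((A l).symm (A' l (Ainv l f))) s l :=
    ((hderiv (Ainv l f) l hl).sub_const (jYX f)).clm_apply_of_apply_eq_zero
      (B := fun m => ((A m).symm : X →L[ℝ] X)) (sub_eq_zero.mpr hy) hbound' hstrong
  refine ((hasDerivWithinAt_const l s y).sub hcorrection).congr_of_mem (fun m _ => ?_) hl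
    |>.congr_deriv (zero_sub _)
  rw [Pi.sub_apply, map_sub, ContinuousLinearEquiv.symm_apply_apply, sub_sub_cancel]

/-- Lemma 2.9, case `m = 1`: differentiability of `λ ↦ A(λ)⁻¹f` for `f` in the smaller
space `Y`, with derivative `-A(λ)⁻¹ A'(λ) A(λ)⁻¹ f`. -/
theorem stmt_14 {X Y : Type*}
    [NormedAddCommGroup X] [NormedSpace ℝ X] [CompleteSpace X]
    [NormedAddCommGroup Y] [NormedSpace ℝ Y] [CompleteSpace Y]
    (ε₀ c c' : ℝ) (hε : 0 < ε₀)
    (jYX : Y →L[ℝ] X)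
    (A : ℝ → X ≃L[ℝ] X)
    (hbound : ∀ l ∈ Set.Icc (-ε₀) ε₀, ∀ f : X, ‖(A l).symm f‖ ≤ c * ‖f‖)
    (A' : ℝ → Y →L[ℝ] X)
    (hderiv : ∀ f : Y, ∀ l ∈ Set.Icc (-ε₀) ε₀,
      HasDerivWithinAt (fun m => A m (jYX f)) (A' l f) (Set.Icc (-ε₀) ε₀) l)
    (hA'cont : ∀ f : Y, ContinuousOn (fun l => A' l f) (Set.Icc (-ε₀) ε₀))
    (hcont : ∀ g : X, ContinuousOn (fun l => A l g) (Set.Icc (-ε₀) ε₀))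
    (Ainv : ℝ → Y → Y)
    (hAinv : ∀ l ∈ Set.Icc (-ε₀) ε₀, ∀ g : Y, jYX (Ainv l g) = (A l).symm (jYX g))
    (hAinvBound : ∀ l ∈ Set.Icc (-ε₀) ε₀, ∀ g : Y, ‖Ainv l g‖ ≤ c' * ‖g‖) :
    ∀ f : Y, ∀ l ∈ Set.Icc (-ε₀) ε₀,
      HasDerivWithinAt (fun m => (A m).symm (jYX f))
        (-((A l).symm (A' l (Ainv l f)))) (Set.Icc (-ε₀) ε₀) l :=
  stmt_14_general ε₀ c jYX A hbound A' hderiv hcont Ainv hAinv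
end

section
/- Let a : [0,1] → ℝ be C¹ with a(x) > 0 for all x, and let u : ℝ × [0,1] → ℝ be a C² function. Define v₁(t,x) := ∂_t u(t,x) + a(x)∂_x u(t,x) and v₂(t,x) := ∂_t u(t,x) − a(x)∂_x u(t,x). If u solves ∂_t²u − a(x)²∂_x²u + b(t,x,u,∂_t u,∂_x u) = 0 with u(t,0) = ∂_x u(t,1) = 0 and u(t+2π,x) = u(t,x), then (v₁, v₂) solves the first-order system ∂_t v₁ − a(x)∂_x v₁ = ∂_t v₂ + a(x)∂_x v₂ = −(a'(x)/2)(v₁ − v₂) − b(t,x, J₀v, J₁v, J₂v), with v₁(t+2π,x) = v₁(t,x), v₂(t+2π,x) = v₂(t,x), v₁(t,0) + v₂(t,0) = 0 and v₁(t,1) − v₂(t,1) = 0, where (J₀v)(t,x) := (1/2)∫₀ˣ (v₁(t,ξ) − v₂(t,ξ))/a(ξ) dξ, (J₁v)(t,x) := (v₁(t,x)+v₂(t,x))/2, (J₂v)(t,x) := (v₁(t,x)−v₂(t,x))/(2a(x)), and moreover u = J₀v. -/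
/-!
For `v = ∂ₜu + σ a ∂ₓu` with `σ = ±1`, the derivative `∂ₜv - σ a ∂ₓv` along the characteristic
is `∂ₜ²u - a² ∂ₓ²u - a a' ∂ₓu` once the mixed partials of the `C²` function `u` are identified.
The equation replaces `∂ₜ²u - a² ∂ₓ²u` by `-b`, and `v₁ - v₂ = 2 a ∂ₓu` turns `a a' ∂ₓu` into
`(a'/2)(v₁ - v₂)`. The same identity, the Dirichlet condition at `0` and the fundamental theorem
of calculus give `J₀v = u`, while `J₁v = ∂ₜu` and `J₂v = ∂ₓu` are immediate.
-/

open Real Function Set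
theorem Function.Periodic.deriv {f : ℝ → ℝ} {c : ℝ} (h : Periodic f c) : Periodic (deriv f) c :=
  fun x => by rw [← deriv_comp_add_const, h.funext]

section PartialDerivatives

variable {E : Type*} [NormedAddCommGroup E] [NormedSpace ℝ E] {u : ℝ → ℝ → E} {t x : ℝ}

theorem HasFDerivAt.hasDerivAt_uncurry_left {L : ℝ × ℝ →L[ℝ] E}
    (h : HasFDerivAt (uncurry u) L (t, x)) : HasDerivAt (fun s => u s x) (L (1, 0)) t :=
  h.comp_hasDerivAt (f := fun s => (s, x)) t ((hasDerivAt_id t).prodMk (hasDerivAt_const t x))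

theorem HasFDerivAt.hasDerivAt_uncurry_right {L : ℝ × ℝ →L[ℝ] E}
    (h : HasFDerivAt (uncurry u) L (t, x)) : HasDerivAt (fun y => u t y) (L (0, 1)) x :=
  h.comp_hasDerivAt (f := fun y => (t, y)) x ((hasDerivAt_const x t).prodMk (hasDerivAt_id x))

theorem deriv_left_eq_fderiv_uncurry (h : DifferentiableAt ℝ (uncurry u) (t, x)) :
    deriv (fun s => u s x) t = fderiv ℝ (uncurry u) (t, x) (1, 0) :=
  h.hasFDerivAt.hasDerivAt_uncurry_left.deriv

theorem deriv_right_eq_fderiv_uncurry (h : DifferentiableAt ℝ (uncurry u) (t, x)) :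
    deriv (fun y => u t y) x = fderiv ℝ (uncurry u) (t, x) (0, 1) :=
  h.hasFDerivAt.hasDerivAt_uncurry_right.deriv

theorem DifferentiableAt.uncurry_left (h : DifferentiableAt ℝ (uncurry u) (t, x)) :
    DifferentiableAt ℝ (fun s => u s x) t :=
  h.hasFDerivAt.hasDerivAt_uncurry_left.differentiableAt

theorem DifferentiableAt.uncurry_right (h : DifferentiableAt ℝ (uncurry u) (t, x)) :
    DifferentiableAt ℝ (fun y => u t y) x :=
  h.hasFDerivAt.hasDerivAt_uncurry_right.differentiableAt

theorem ContDiff.uncurry_deriv_left {n : WithTop ℕ∞} (hu : ContDiff ℝ (n + 1) (uncurry u)) :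
    ContDiff ℝ n (uncurry fun t x => deriv (fun s => u s x) t) := by
  have hdiff := hu.differentiable (by simp)
  have heq : (uncurry fun t x => deriv (fun s => u s x) t)
      = fun p => fderiv ℝ (uncurry u) p (1, 0) := by
    funext ⟨t, x⟩
    exact deriv_left_eq_fderiv_uncurry (hdiff _)
  rw [heq]
  exact (hu.fderiv_right le_rfl).clm_apply contDiff_const

theorem ContDiff.uncurry_deriv_right {n : WithTop ℕ∞} (hu : ContDiff ℝ (n + 1) (uncurry u)) :
    ContDiff ℝ n (uncurry fun t x => deriv (fun y => u t y) x) := by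
  have hdiff := hu.differentiable (by simp)
  have heq : (uncurry fun t x => deriv (fun y => u t y) x)
      = fun p => fderiv ℝ (uncurry u) p (0, 1) := by
    funext ⟨t, x⟩
    exact deriv_right_eq_fderiv_uncurry (hdiff _)
  rw [heq]
  exact (hu.fderiv_right le_rfl).clm_apply contDiff_const

theorem ContDiff.deriv_right_deriv_left_comm (hu : ContDiff ℝ 2 (uncurry u)) (t x : ℝ) :
    deriv (fun y => deriv (fun s => u s y) t) x
      = deriv (fun s => deriv (fun y => u s y) x) t := by
  set F := uncurry u
  have hdiff : Differentiable ℝ F := hu.differentiable (by simp)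
  have hF' : HasFDerivAt (fderiv ℝ F) (fderiv ℝ (fderiv ℝ F) (t, x)) (t, x) :=
    ((hu.fderiv_right (m := 1) (by norm_num)).differentiable (by simp) _).hasFDerivAt
  have hx : HasDerivAt (fun y => fderiv ℝ F (t, y) (1, 0))
      (fderiv ℝ (fderiv ℝ F) (t, x) (0, 1) (1, 0)) x := by
    simpa using (hF'.hasDerivAt_uncurry_right (u := fun s y => fderiv ℝ F (s, y))).clm_apply
      (hasDerivAt_const x _)
  have ht : HasDerivAt (fun s => fderiv ℝ F (s, x) (0, 1))
      (fderiv ℝ (fderiv ℝ F) (t, x) (1, 0) (0, 1)) t := by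
    simpa using (hF'.hasDerivAt_uncurry_left (u := fun s y => fderiv ℝ F (s, y))).clm_apply
      (hasDerivAt_const t _)
  simp only [deriv_left_eq_fderiv_uncurry (hdiff _), deriv_right_eq_fderiv_uncurry (hdiff _)]
  rw [hx.deriv, ht.deriv]
  exact hu.contDiffAt.isSymmSndFDerivAt (by simp) _ _

end PartialDerivatives

theorem deriv_sub_mul_deriv_of_riemannInvariant {u v : ℝ → ℝ → ℝ} {a : ℝ → ℝ} {t x : ℝ}
    (hu : ContDiff ℝ 2 (uncurry u)) (ha : DifferentiableAt ℝ a x) (σ : ℝ)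
    (hv : ∀ t x, v t x = deriv (fun s => u s x) t + σ * a x * deriv (fun y => u t y) x) :
    deriv (fun s => v s x) t - σ * a x * deriv (fun y => v t y) x
      = deriv (fun s => deriv (fun s' => u s' x) s) t
        - σ ^ 2 * (a x ^ 2 * deriv (fun y => deriv (fun y' => u t y') y) x
          + a x * deriv a x * deriv (fun y => u t y) x) := by
  have hut := (hu.uncurry_deriv_left (n := 1)).differentiable one_ne_zero (t, x)
  have hux := (hu.uncurry_deriv_right (n := 1)).differentiable one_ne_zero (t, x)
  have hv_t : HasDerivAt (fun s => v s x) (deriv (fun s => deriv (fun s' => u s' x) s) t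
      + σ * a x * deriv (fun s => deriv (fun y => u s y) x) t) t := by
    simp only [hv]
    exact hut.uncurry_left.hasDerivAt.add (hux.uncurry_left.hasDerivAt.const_mul _)
  have hv_x : HasDerivAt (fun y => v t y) (deriv (fun y => deriv (fun s => u s y) t) x
      + (σ * deriv a x * deriv (fun y => u t y) x
        + σ * a x * deriv (fun y => deriv (fun y' => u t y') y) x)) x := by
    simp only [hv]
    exact hut.uncurry_right.hasDerivAt.add
      ((ha.hasDerivAt.const_mul σ).mul hux.uncurry_right.hasDerivAt)
  rw [hv_t.deriv, hv_x.deriv, hu.deriv_right_deriv_left_comm]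
  ring

theorem half_integral_div_eq_sub {f c w : ℝ → ℝ} {x₀ x : ℝ} (hf : ContDiff ℝ 1 f)
    (hc : ∀ ξ ∈ uIcc x₀ x, c ξ ≠ 0) (hw : ∀ ξ, w ξ = 2 * c ξ * deriv f ξ) :
    (1 / 2) * ∫ ξ in x₀..x, w ξ / c ξ = f x - f x₀ := by
  have hcongr : EqOn (fun ξ => w ξ / c ξ) (fun ξ => 2 * deriv f ξ) (uIcc x₀ x) := by
    intro ξ hξ
    dsimp only
    rw [hw]
    field_simp [hc ξ hξ]
  rw [intervalIntegral.integral_congr hcongr, intervalIntegral.integral_const_mul,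
    intervalIntegral.integral_deriv_eq_sub
      (fun ξ _ => hf.differentiable one_ne_zero ξ)
      ((hf.continuous_deriv le_rfl).intervalIntegrable x₀ x)]
  ring

theorem stmt_17_general (a : ℝ → ℝ) (ha : ContDiff ℝ 1 a)
    (hapos : ∀ x ∈ Set.Icc (0:ℝ) 1, 0 < a x)
    (b : ℝ → ℝ → ℝ → ℝ → ℝ → ℝ)
    (u : ℝ → ℝ → ℝ) (hu : ContDiff ℝ 2 (Function.uncurry u))
    (hpde : ∀ t : ℝ, ∀ x ∈ Set.Icc (0:ℝ) 1,
      deriv (fun s => deriv (fun s' => u s' x) s) t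
        - (a x) ^ 2 * deriv (fun y => deriv (fun y' => u t y') y) x
        + b t x (u t x) (deriv (fun s => u s x) t) (deriv (fun y => u t y) x) = 0)
    (hbc0 : ∀ t, u t 0 = 0) (hbc1 : ∀ t, deriv (fun y => u t y) 1 = 0)
    (hper : ∀ t x, u (t + 2 * π) x = u t x)
    (v₁ v₂ : ℝ → ℝ → ℝ)
    (hv₁ : ∀ t x, v₁ t x = deriv (fun s => u s x) t + a x * deriv (fun y => u t y) x)
    (hv₂ : ∀ t x, v₂ t x = deriv (fun s => u s x) t - a x * deriv (fun y => u t y) x) :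
    (∀ t : ℝ, ∀ x ∈ Set.Icc (0:ℝ) 1,
      (deriv (fun s => v₁ s x) t - a x * deriv (fun y => v₁ t y) x
        = -(deriv a x / 2) * (v₁ t x - v₂ t x)
          - b t x ((1/2) * ∫ ξ in (0:ℝ)..x, (v₁ t ξ - v₂ t ξ) / a ξ)
              ((v₁ t x + v₂ t x) / 2) ((v₁ t x - v₂ t x) / (2 * a x))) ∧
      (deriv (fun s => v₂ s x) t + a x * deriv (fun y => v₂ t y) x
        = -(deriv a x / 2) * (v₁ t x - v₂ t x)
          - b t x ((1/2) * ∫ ξ in (0:ℝ)..x, (v₁ t ξ - v₂ t ξ) / a ξ)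
              ((v₁ t x + v₂ t x) / 2) ((v₁ t x - v₂ t x) / (2 * a x)))) ∧
    (∀ t x, v₁ (t + 2 * π) x = v₁ t x ∧ v₂ (t + 2 * π) x = v₂ t x) ∧
    (∀ t, v₁ t 0 + v₂ t 0 = 0) ∧ (∀ t, v₁ t 1 - v₂ t 1 = 0) ∧
    (∀ t : ℝ, ∀ x ∈ Set.Icc (0:ℝ) 1,
      u t x = (1/2) * ∫ ξ in (0:ℝ)..x, (v₁ t ξ - v₂ t ξ) / a ξ) := by
  have hJ₀ : ∀ t, ∀ x ∈ Icc (0 : ℝ) 1,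
      (1 / 2) * ∫ ξ in (0 : ℝ)..x, (v₁ t ξ - v₂ t ξ) / a ξ = u t x := by
    intro t x hx
    have hsub := half_integral_div_eq_sub (f := fun y => u t y) (x₀ := 0) (x := x)
      (w := fun ξ => v₁ t ξ - v₂ t ξ)
      ((hu.comp (contDiff_const.prodMk contDiff_id)).of_le one_le_two)
      (fun ξ hξ => (hapos ξ (uIcc_subset_Icc (left_mem_Icc.2 zero_le_one) hx hξ)).ne')
      (fun ξ => by rw [hv₁, hv₂]; ring)
    simpa [hbc0] using hsub
  have hJ₁ : ∀ t x, (v₁ t x + v₂ t x) / 2 = deriv (fun s => u s x) t := fun t x => by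
    rw [hv₁, hv₂]; ring
  have hJ₂ : ∀ t, ∀ x ∈ Icc (0 : ℝ) 1,
      (v₁ t x - v₂ t x) / (2 * a x) = deriv (fun y => u t y) x := fun t x hx => by
    rw [hv₁, hv₂]; field_simp [(hapos x hx).ne']; ring
  have hut_per : ∀ t x, deriv (fun s => u s x) (t + 2 * π) = deriv (fun s => u s x) t :=
    fun t x => Periodic.deriv (fun s => hper s x) t
  refine ⟨fun t x hx => ⟨?_, ?_⟩, fun t x => ⟨?_, ?_⟩, fun t => ?_, fun t => ?_,
    fun t x hx => (hJ₀ t x hx).symm⟩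
  · have hchar := deriv_sub_mul_deriv_of_riemannInvariant (v := v₁) (t := t) hu
      (ha.differentiable one_ne_zero x) 1 (fun s y => by rw [hv₁, one_mul])
    rw [hJ₀ t x hx, hJ₁, hJ₂ t x hx, hv₁ t x, hv₂ t x]
    linear_combination hchar + hpde t x hx
  · have hchar := deriv_sub_mul_deriv_of_riemannInvariant (v := v₂) (t := t) hu
      (ha.differentiable one_ne_zero x) (-1) (fun s y => by rw [hv₂]; ring)
    rw [hJ₀ t x hx, hJ₁, hJ₂ t x hx, hv₁ t x, hv₂ t x]
    linear_combination hchar + hpde t x hx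
  · simp only [hv₁, hper, hut_per]
  · simp only [hv₂, hper, hut_per]
  · simp [hv₁, hv₂, hbc0]
  · simp [hv₁, hv₂, hbc1]

/-- Lemma 4.3 (i): the Riemann invariants `v₁ = ∂ₜu + a∂ₓu`, `v₂ = ∂ₜu - a∂ₓu` of a
time-periodic solution of the second-order equation with mixed Dirichlet–Neumann boundary
conditions solve the first-order system with reflection boundary conditions, and `u = J₀v`. -/
theorem stmt_17 (a : ℝ → ℝ) (ha : ContDiff ℝ 1 a)
    (hapos : ∀ x ∈ Set.Icc (0:ℝ) 1, 0 < a x)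
    (b : ℝ → ℝ → ℝ → ℝ → ℝ → ℝ)
    (hb : ContDiff ℝ 1 (fun p : ℝ × ℝ × ℝ × ℝ × ℝ => b p.1 p.2.1 p.2.2.1 p.2.2.2.1 p.2.2.2.2))
    (hbper : ∀ t x p q r, b (t + 2 * π) x p q r = b t x p q r)
    (u : ℝ → ℝ → ℝ) (hu : ContDiff ℝ 2 (Function.uncurry u))
    (hpde : ∀ t : ℝ, ∀ x ∈ Set.Icc (0:ℝ) 1,
      deriv (fun s => deriv (fun s' => u s' x) s) t
        - (a x) ^ 2 * deriv (fun y => deriv (fun y' => u t y') y) x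
        + b t x (u t x) (deriv (fun s => u s x) t) (deriv (fun y => u t y) x) = 0)
    (hbc0 : ∀ t, u t 0 = 0) (hbc1 : ∀ t, deriv (fun y => u t y) 1 = 0)
    (hper : ∀ t x, u (t + 2 * π) x = u t x)
    (v₁ v₂ : ℝ → ℝ → ℝ)
    (hv₁ : ∀ t x, v₁ t x = deriv (fun s => u s x) t + a x * deriv (fun y => u t y) x)
    (hv₂ : ∀ t x, v₂ t x = deriv (fun s => u s x) t - a x * deriv (fun y => u t y) x) :
    (∀ t : ℝ, ∀ x ∈ Set.Icc (0:ℝ) 1,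
      (deriv (fun s => v₁ s x) t - a x * deriv (fun y => v₁ t y) x
        = -(deriv a x / 2) * (v₁ t x - v₂ t x)
          - b t x ((1/2) * ∫ ξ in (0:ℝ)..x, (v₁ t ξ - v₂ t ξ) / a ξ)
              ((v₁ t x + v₂ t x) / 2) ((v₁ t x - v₂ t x) / (2 * a x))) ∧
      (deriv (fun s => v₂ s x) t + a x * deriv (fun y => v₂ t y) x
        = -(deriv a x / 2) * (v₁ t x - v₂ t x)
          - b t x ((1/2) * ∫ ξ in (0:ℝ)..x, (v₁ t ξ - v₂ t ξ) / a ξ)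
              ((v₁ t x + v₂ t x) / 2) ((v₁ t x - v₂ t x) / (2 * a x)))) ∧
    (∀ t x, v₁ (t + 2 * π) x = v₁ t x ∧ v₂ (t + 2 * π) x = v₂ t x) ∧
    (∀ t, v₁ t 0 + v₂ t 0 = 0) ∧ (∀ t, v₁ t 1 - v₂ t 1 = 0) ∧
    (∀ t : ℝ, ∀ x ∈ Set.Icc (0:ℝ) 1,
      u t x = (1/2) * ∫ ξ in (0:ℝ)..x, (v₁ t ξ - v₂ t ξ) / a ξ) :=
  stmt_17_general a ha hapos b u hu hpde hbc0 hbc1 hper v₁ v₂ hv₁ hv₂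
end
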